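/- arXiv:1512.02356 — 3 statements merged into one kernel-verified Lean document; each statement's English description precedes it below -/
import Mathlib

section
/- If two closed disks together cover a triangle (the closed convex hull of three points), then at least one of the disks contains an entire edge of the triangle; consequently the common radius of the two disks is at least half the length of the shortest edge of the triangle. -/
/-!
Each vertex lies in one of the two disks, so by pigeonhole both endpoints of some edge lie in
the same disk; a disk is convex, hence contains that whole edge, whose length is then at most
its diameter `2 * ρ`.
-/

theorem exists_pair_mem_of_mem_union {α : Type*} {A B : Set α} {a b c : α}
    (ha : a ∈ A ∪ B) (hb : b ∈ A ∪ B) (hc : c ∈ A ∪ B) :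
    (a ∈ A ∧ b ∈ A) ∨ (a ∈ B ∧ b ∈ B) ∨ (b ∈ A ∧ c ∈ A) ∨ (b ∈ B ∧ c ∈ B) ∨
      (c ∈ A ∧ a ∈ A) ∨ (c ∈ B ∧ a ∈ B) := by
  rw [Set.mem_union] at ha hb hc
  tauto

theorem exists_segment_subset_of_mem_union {E : Type*} [AddCommGroup E] [Module ℝ E]
    {A B : Set E} (hA : Convex ℝ A) (hB : Convex ℝ B) {a b c : E}
    (ha : a ∈ A ∪ B) (hb : b ∈ A ∪ B) (hc : c ∈ A ∪ B) :
    segment ℝ a b ⊆ A ∨ segment ℝ a b ⊆ B ∨ segment ℝ b c ⊆ A ∨ segment ℝ b c ⊆ B ∨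
      segment ℝ c a ⊆ A ∨ segment ℝ c a ⊆ B := by
  rcases exists_pair_mem_of_mem_union ha hb hc with h | h | h | h | h | h
  · exact Or.inl (hA.segment_subset h.1 h.2)
  · exact Or.inr <| Or.inl (hB.segment_subset h.1 h.2)
  · exact Or.inr <| Or.inr <| Or.inl (hA.segment_subset h.1 h.2)
  · exact Or.inr <| Or.inr <| Or.inr <| Or.inl (hB.segment_subset h.1 h.2)
  · exact Or.inr <| Or.inr <| Or.inr <| Or.inr <| Or.inl (hA.segment_subset h.1 h.2)
  · exact Or.inr <| Or.inr <| Or.inr <| Or.inr <| Or.inr (hB.segment_subset h.1 h.2)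

theorem dist_le_two_mul_of_mem_closedBall {α : Type*} [PseudoMetricSpace α] {x y d : α}
    {r : ℝ} (hx : x ∈ Metric.closedBall d r) (hy : y ∈ Metric.closedBall d r) :
    dist x y ≤ 2 * r :=
  calc dist x y ≤ dist x d + dist y d := dist_triangle_right x y d
    _ ≤ r + r := add_le_add hx hy
    _ = 2 * r := (two_mul r).symm

theorem dist_le_two_mul_of_segment_subset_closedBall {E : Type*} [SeminormedAddCommGroup E]
    [NormedSpace ℝ E] {x y d : E} {r : ℝ} (h : segment ℝ x y ⊆ Metric.closedBall d r) :
    dist x y ≤ 2 * r :=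
  dist_le_two_mul_of_mem_closedBall (h (left_mem_segment ℝ x y)) (h (right_mem_segment ℝ x y))

/-- If two closed disks of common radius `ρ` cover a triangle (convex hull of three
points), then one of the disks contains an entire edge; consequently
`ρ` is at least half the length of the shortest edge. -/
theorem stmt2 (a b c c₁ c₂ : EuclideanSpace ℝ (Fin 2)) (ρ : ℝ)
    (hcov : convexHull ℝ ({a, b, c} : Set (EuclideanSpace ℝ (Fin 2)))
      ⊆ Metric.closedBall c₁ ρ ∪ Metric.closedBall c₂ ρ) :
    (segment ℝ a b ⊆ Metric.closedBall c₁ ρ ∨ segment ℝ a b ⊆ Metric.closedBall c₂ ρ ∨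
     segment ℝ b c ⊆ Metric.closedBall c₁ ρ ∨ segment ℝ b c ⊆ Metric.closedBall c₂ ρ ∨
     segment ℝ c a ⊆ Metric.closedBall c₁ ρ ∨ segment ℝ c a ⊆ Metric.closedBall c₂ ρ) ∧
    min (dist a b) (min (dist b c) (dist c a)) / 2 ≤ ρ := by
  have hvert := (subset_convexHull ℝ _).trans hcov
  have hedge := exists_segment_subset_of_mem_union (a := a) (b := b) (c := c)
    (convex_closedBall c₁ ρ) (convex_closedBall c₂ ρ) (hvert (by simp)) (hvert (by simp))
    (hvert (by simp))
  refine ⟨hedge, ?_⟩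
  have hshort : dist a b ≤ 2 * ρ ∨ dist b c ≤ 2 * ρ ∨ dist c a ≤ 2 * ρ := by
    rcases hedge with h | h | h | h | h | h <;>
      simp only [dist_le_two_mul_of_segment_subset_closedBall h, true_or, or_true]
  rw [div_le_iff₀ two_pos, mul_comm, min_le_iff, min_le_iff]
  exact hshort
end

section
/- Let e, f, g, h be the corners of an axis-parallel rectangle with |fg| = L, |ef| = W ≤ L, where fg is a horizontal side of length L. If a point a lies on side he with |ga| = |gf| = L = 1, then the distance from g to the intersection point q of segments ga' and fa'' (where a', a'' on he satisfy |ga'| = |fa''| = 1) is 1/(2√(1 − W²)). -/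
/-!
Write `s = √(1 - W²)`, so that `a' = (s, W)` and `a'' = (1 - s, W)`. The two segments are
mirror images under `x ↦ 1 - x`; comparing heights, they meet at the same parameter `t`, and then
comparing abscissae `t s = 1 - t s`, i.e. `q` lies on the axis `x = 1/2` and `t = 1/(2s)`.
Since `|ga'| = 1`, this parameter is the distance `|gq|`.
-/

open AffineMap

lemma EuclideanSpace.lineMap_apply_coord {ι : Type*} (x y : EuclideanSpace ℝ ι) (t : ℝ) (i : ι) :
    lineMap x y t i = lineMap (x i) (y i) t := by
  simp [lineMap_apply_module]

lemma EuclideanSpace.dist_eq_sqrt_fin_two (x y : EuclideanSpace ℝ (Fin 2)) :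
    dist x y = √((x 0 - y 0) ^ 2 + (x 1 - y 1) ^ 2) := by
  simp [EuclideanSpace.dist_eq, Fin.sum_univ_two, Real.dist_eq, sq_abs]

section MirrorSegments

variable {s W : ℝ} {g f a' a'' q : EuclideanSpace ℝ (Fin 2)}

lemma exists_lineMap_eq_of_mem_segment_inter_mirror (hW : W ≠ 0)
    (hg0 : g 0 = 0) (hg1 : g 1 = 0) (hf0 : f 0 = 1) (hf1 : f 1 = 0)
    (ha'0 : a' 0 = s) (ha'1 : a' 1 = W) (ha''0 : a'' 0 = 1 - s) (ha''1 : a'' 1 = W)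
    (hq1 : q ∈ segment ℝ g a') (hq2 : q ∈ segment ℝ f a'') :
    ∃ t, 2 * t * s = 1 ∧ q = lineMap g a' t := by
  rw [segment_eq_image_lineMap] at hq1 hq2
  obtain ⟨t, -, rfl⟩ := hq1
  obtain ⟨d, -, hd⟩ := hq2
  have hx := congrArg (· 0) hd
  have hy := congrArg (· 1) hd
  simp only [EuclideanSpace.lineMap_apply_coord, lineMap_apply_ring', hg0, hg1, hf0, hf1,
    ha'0, ha'1, ha''0, ha''1] at hx hy
  obtain rfl : d = t := mul_right_cancel₀ hW (by linarith)
  exact ⟨d, by linarith, rfl⟩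

end MirrorSegments

theorem stmt10_general (W : ℝ) (hW : 0 < W)
    (g f a' a'' q : EuclideanSpace ℝ (Fin 2))
    (hg0 : g 0 = 0) (hg1 : g 1 = 0) (hf0 : f 0 = 1) (hf1 : f 1 = 0)
    (ha'0 : a' 0 = Real.sqrt (1 - W ^ 2)) (ha'1 : a' 1 = W)
    (ha''0 : a'' 0 = 1 - Real.sqrt (1 - W ^ 2)) (ha''1 : a'' 1 = W)
    (hq1 : q ∈ segment ℝ g a') (hq2 : q ∈ segment ℝ f a'') :
    dist g q = 1 / (2 * Real.sqrt (1 - W ^ 2)) := by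
  set s := √(1 - W ^ 2)
  obtain ⟨t, hts, rfl⟩ := exists_lineMap_eq_of_mem_segment_inter_mirror hW.ne'
    hg0 hg1 hf0 hf1 ha'0 ha'1 ha''0 ha''1 hq1 hq2
  have hs : 0 < s := lt_of_le_of_ne (Real.sqrt_nonneg _) fun h => by simp [← h] at hts
  have ht : t = 1 / (2 * s) := by field_simp; linarith
  have hga' : dist g a' = 1 := by
    have hs2 : s ^ 2 = 1 - W ^ 2 := Real.sq_sqrt (Real.sqrt_pos.mp hs).le
    rw [EuclideanSpace.dist_eq_sqrt_fin_two, hg0, hg1, ha'0, ha'1, ← Real.sqrt_one]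
    congr 1
    linear_combination hs2
  rw [dist_left_lineMap, hga', ht, mul_one, Real.norm_of_nonneg (by positivity)]

/-- In the rectangle with corners `g = (0,0)`, `f = (1,0)`, `e = (1,W)`, `h = (0,W)`
(length `|fg| = 1`, width `W ≤ √3/2`), letting `a', a''` be the points on side `he`
with `|ga'| = |fa''| = 1`, the intersection point `q` of the segments `ga'` and
`fa''` satisfies `|gq| = 1/(2√(1 − W²))`. -/
theorem stmt10 (W : ℝ) (hW : 0 < W) (hW2 : W ≤ Real.sqrt 3 / 2)
    (g f a' a'' q : EuclideanSpace ℝ (Fin 2))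
    (hg0 : g 0 = 0) (hg1 : g 1 = 0) (hf0 : f 0 = 1) (hf1 : f 1 = 0)
    (ha'0 : a' 0 = Real.sqrt (1 - W ^ 2)) (ha'1 : a' 1 = W)
    (ha''0 : a'' 0 = 1 - Real.sqrt (1 - W ^ 2)) (ha''1 : a'' 1 = W)
    (hq1 : q ∈ segment ℝ g a') (hq2 : q ∈ segment ℝ f a'') :
    dist g q = 1 / (2 * Real.sqrt (1 - W ^ 2)) :=
  stmt10_general W hW g f a' a'' q hg0 hg1 hf0 hf1 ha'0 ha'1 ha''0 ha''1 hq1 hq2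
end

section
/- Let a convex quadrilateral abcd of diameter 1 be inscribed with ac horizontal of length 1, a at height 0, b above ac at height W₁ with |ab| ≤ 1, and d below ac at depth W₂ with |cd| = 1, where W₁ ≥ W/2 ≥ W₂ and W₁ + W₂ = W. Then the perpendicular bisector of segment ab, measured from the midpoint of ab to its intersection z with segment cd, has length |m₁z| ≥ W/2. -/
/-!
Let `n` be the unit normal of the line `cd` with `⟪c - a, n⟫ = W₂`. The signed distance
`⟪c - p, n⟫` from a point `p` to that line is affine in `p`, so for the midpoint `m₁` it is the
average of the distances of `a`, which is `W₂`, and of `b`, which is at least `W₁`: the latter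
reduces to `W₁ (1 - √(1 - W₂²)) ≤ W₂ (1 - √(1 - W₁²))`, true because `W₂ ≤ W₁` and
`(1 - √(1 - w²)) / w` is increasing. Every point of segment `cd`, in particular `z`, is therefore
at distance at least `(W₁ + W₂) / 2` from `m₁`.
-/
open RealInnerProductSpace

theorem mul_one_sub_sqrt_one_sub_sq_le {x y : ℝ} (hx : 0 ≤ x) (hxy : x ≤ y) (hy : y ≤ 1) :
    y * (1 - √(1 - x ^ 2)) ≤ x * (1 - √(1 - y ^ 2)) := by
  have hsx : √(1 - x ^ 2) ^ 2 = 1 - x ^ 2 := Real.sq_sqrt (by nlinarith)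
  have hsy : √(1 - y ^ 2) ^ 2 = 1 - y ^ 2 := Real.sq_sqrt (by nlinarith)
  have hs : √(1 - y ^ 2) ≤ √(1 - x ^ 2) := Real.sqrt_le_sqrt (by nlinarith)
  have hcross : x * (1 + √(1 - y ^ 2)) ≤ y * (1 + √(1 - x ^ 2)) := by
    nlinarith [Real.sqrt_nonneg (1 - y ^ 2)]
  refine le_of_mul_le_mul_right ?_ (by positivity : 0 < (1 + √(1 - x ^ 2)) * (1 + √(1 - y ^ 2)))
  calc y * (1 - √(1 - x ^ 2)) * ((1 + √(1 - x ^ 2)) * (1 + √(1 - y ^ 2)))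
      = x * y * (x * (1 + √(1 - y ^ 2))) := by
        linear_combination (-y * (1 + √(1 - y ^ 2))) * hsx
    _ ≤ x * y * (y * (1 + √(1 - x ^ 2))) := mul_le_mul_of_nonneg_left hcross (by nlinarith)
    _ = x * (1 - √(1 - y ^ 2)) * ((1 + √(1 - x ^ 2)) * (1 + √(1 - y ^ 2))) := by
        linear_combination (x * (1 + √(1 - x ^ 2))) * hsy

theorem inner_sub_le_norm_mul_dist_of_mem_segment {E : Type*} [NormedAddCommGroup E]
    [InnerProductSpace ℝ E] {c d p z n : E} (hcd : ⟪d - c, n⟫ = 0) (hz : z ∈ segment ℝ c d) :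
    ⟪c - p, n⟫ ≤ ‖n‖ * dist p z := by
  obtain ⟨θ, -, rfl⟩ := (segment_eq_image' ℝ c d ▸ hz : _)
  calc ⟪c - p, n⟫ = ⟪c + θ • (d - c) - p, n⟫ := by
        rw [add_sub_right_comm, inner_add_left, inner_smul_left, hcd, mul_zero, add_zero]
    _ ≤ ‖c + θ • (d - c) - p‖ * ‖n‖ := real_inner_le_norm _ _
    _ = ‖n‖ * dist p (c + θ • (d - c)) := by rw [mul_comm, dist_comm, dist_eq_norm]

theorem inner_sub_midpoint {E : Type*} [NormedAddCommGroup E] [InnerProductSpace ℝ E]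
    (a b c n : E) : ⟪c - midpoint ℝ a b, n⟫ = (⟪c - a, n⟫ + ⟪c - b, n⟫) / 2 := by
  rw [midpoint_eq_smul_add, inner_sub_left, inner_smul_left, inner_add_left, inner_sub_left,
    inner_sub_left]
  simp only [invOf_eq_inv, conj_trivial]
  ring

theorem EuclideanSpace.real_inner_fin_two (x y : EuclideanSpace ℝ (Fin 2)) :
    ⟪x, y⟫ = x 0 * y 0 + x 1 * y 1 := by
  simp [PiLp.inner_apply, Fin.sum_univ_two, mul_comm]

theorem stmt16_general (W W₁ W₂ t : ℝ)
    (hsum : W₁ + W₂ = W) (hmid1 : W / 2 ≤ W₁) (hW₂ : 0 ≤ W₂)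
    (ht1 : W₁ ≤ t) (ht2 : t ≤ 1)
    (a b c d m₁ z : EuclideanSpace ℝ (Fin 2))
    (ha0 : a 0 = 0) (ha1 : a 1 = 0) (hc0 : c 0 = 1) (hc1 : c 1 = 0)
    (hb0 : b 0 = Real.sqrt (t ^ 2 - W₁ ^ 2)) (hb1 : b 1 = W₁)
    (hd0 : d 0 = 1 - Real.sqrt (1 - W₂ ^ 2)) (hd1 : d 1 = -W₂)
    (hm : m₁ = midpoint ℝ a b)
    (hz : z ∈ segment ℝ c d) :
    W / 2 ≤ dist m₁ z := by
  have hW₂₁ : W₂ ≤ W₁ := by linarith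
  set n : EuclideanSpace ℝ (Fin 2) := !₂[W₂, -√(1 - W₂ ^ 2)]
  have hn : ‖n‖ = 1 := by
    have hs : √(1 - W₂ ^ 2) ^ 2 = 1 - W₂ ^ 2 := Real.sq_sqrt (by nlinarith)
    simp [n, EuclideanSpace.norm_eq, Fin.sum_univ_two, hs]
  have hcd : ⟪d - c, n⟫ = 0 := by
    simp [n, EuclideanSpace.real_inner_fin_two, hc0, hc1, hd0, hd1, mul_comm]
  have ha : ⟪c - a, n⟫ = W₂ := by
    simp [n, EuclideanSpace.real_inner_fin_two, hc0, hc1, ha0, ha1]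
  have hb : ⟪c - b, n⟫ = (1 - √(t ^ 2 - W₁ ^ 2)) * W₂ + W₁ * √(1 - W₂ ^ 2) := by
    simp [n, EuclideanSpace.real_inner_fin_two, hc0, hc1, hb0, hb1]
  have hb_far : W₁ ≤ ⟪c - b, n⟫ := by
    have hb0_le : √(t ^ 2 - W₁ ^ 2) ≤ √(1 - W₁ ^ 2) := Real.sqrt_le_sqrt (by nlinarith)
    rw [hb]
    linarith [mul_one_sub_sqrt_one_sub_sq_le hW₂ hW₂₁ (by linarith),
      mul_le_mul_of_nonneg_left hb0_le hW₂]
  calc W / 2 ≤ ⟪c - m₁, n⟫ := by rw [hm, inner_sub_midpoint]; linarith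
    _ ≤ dist m₁ z := by simpa [hn] using inner_sub_le_norm_mul_dist_of_mem_segment hcd hz

/-- For the quadrilateral `abcd` with `a = (0,0)`, `c = (1,0)`,
`b = (√(t² − W₁²), W₁)` where `t = |ab| ≤ 1`, and `d = (1 − √(1 − W₂²), −W₂)`
(so `|cd| = 1`), with `W₁ ≥ W/2 ≥ W₂ ≥ 0` and `W₁ + W₂ = W`: the point `z` where the
perpendicular bisector of `ab` meets segment `cd` satisfies `|m₁z| ≥ W/2`,
`m₁` being the midpoint of `ab`. -/
theorem stmt16 (W W₁ W₂ t : ℝ) (hW : 0 < W)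
    (hsum : W₁ + W₂ = W) (hmid1 : W / 2 ≤ W₁) (hmid2 : W₂ ≤ W / 2) (hW₂ : 0 ≤ W₂)
    (ht1 : W₁ ≤ t) (ht2 : t ≤ 1)
    (a b c d m₁ z : EuclideanSpace ℝ (Fin 2))
    (ha0 : a 0 = 0) (ha1 : a 1 = 0) (hc0 : c 0 = 1) (hc1 : c 1 = 0)
    (hb0 : b 0 = Real.sqrt (t ^ 2 - W₁ ^ 2)) (hb1 : b 1 = W₁)
    (hd0 : d 0 = 1 - Real.sqrt (1 - W₂ ^ 2)) (hd1 : d 1 = -W₂)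
    (hm : m₁ = midpoint ℝ a b)
    (hz : z ∈ segment ℝ c d) (hbis : dist z a = dist z b) :
    W / 2 ≤ dist m₁ z :=
  stmt16_general W W₁ W₂ t hsum hmid1 hW₂ ht1 ht2 a b c d m₁ z ha0 ha1 hc0 hc1 hb0 hb1 hd0 hd1 hm hz
end
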